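/- arXiv:0712.2813 — 4 statements merged into one kernel-verified Lean document; each statement's English description precedes it below -/
import Mathlib

section
/- With B and C defined as in the construction above (C e_{ijk} = e_{i,j+1,k} for j < r_i and C e_{i,r_i,k} = e_{i+1,1,k} + e_{i−1,1,k+δ_i}), the vector e_{111} is a cyclic vector for the pair (C,B): the vectors obtained by applying words in B and C to e_{111} span F^n. -/
/-- The index `(i, j, k)` is valid for the partition data `(l, lam, r)`. -/
def ValidIdx (l : ℕ) (lam r : ℕ → ℕ) (p : ℕ × ℕ × ℕ) : Prop :=
  1 ≤ p.1 ∧ p.1 ≤ l ∧ 1 ≤ p.2.1 ∧ p.2.1 ≤ r p.1 ∧ 1 ≤ p.2.2 ∧ p.2.2 ≤ lam p.1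

lemma validIdx_def (l : ℕ) (lam r : ℕ → ℕ) (i j k : ℕ) :
    ValidIdx l lam r (i, j, k) ↔
      1 ≤ i ∧ i ≤ l ∧ 1 ≤ j ∧ j ≤ r i ∧ 1 ≤ k ∧ k ≤ lam i := Iff.rfl

/-- With `B` the Jordan nilpotent and `C` as in the construction, the vector `e_{1,1,1}`
is cyclic for the pair `(C, B)`: the vectors obtained by applying words in `B` and `C`
to `e_{1,1,1}` span the whole space. -/
theorem jordan_construction_cyclic {F V : Type*} [Field F] [AddCommGroup V] [Module F V]
    (l : ℕ) (hl : 0 < l) (lam r : ℕ → ℕ)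
    (hlam : ∀ i, 1 ≤ i → i < l → lam (i + 1) < lam i)
    (hlampos : ∀ i, 1 ≤ i → i ≤ l → 0 < lam i)
    (hrpos : ∀ i, 1 ≤ i → i ≤ l → 0 < r i)
    (e : ℕ × ℕ × ℕ → V)
    (hzero : ∀ p, ¬ ValidIdx l lam r p → e p = 0)
    (hbasis : LinearIndependent F (fun p : {p // ValidIdx l lam r p} => e p.val))
    (hspan : Submodule.span F (Set.range e) = ⊤)
    (B C : Module.End F V)
    (hB : ∀ i j k, ValidIdx l lam r (i, j, k) → B (e (i, j, k)) = e (i, j, k + 1))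
    (hC : ∀ i j k, ValidIdx l lam r (i, j, k) →
      C (e (i, j, k)) =
        if j < r i then e (i, j + 1, k)
        else e (i + 1, 1, k) + e (i - 1, 1, k - (lam (i - 1) - lam i))) :
    Submodule.span F
      {x | ∃ w : List (Module.End F V), (∀ f ∈ w, f = B ∨ f = C) ∧
        x = w.prod (e (1, 1, 1))} = ⊤ := by
  set S : Set V := {x | ∃ w : List (Module.End F V), (∀ f ∈ w, f = B ∨ f = C) ∧
        x = w.prod (e (1, 1, 1))} with hS
  set W := Submodule.span F S with hW
  have hmem0 : e (1, 1, 1) ∈ W := Submodule.subset_span ⟨[], by simp, by simp⟩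
  -- W is closed under B and C
  have hstep : ∀ (T : Module.End F V), (T = B ∨ T = C) → ∀ x ∈ W, T x ∈ W := by
    intro T hT x hx
    induction hx using Submodule.span_induction with
    | mem y hy =>
      obtain ⟨w, hw, rfl⟩ := hy
      refine Submodule.subset_span ⟨T :: w, ?_, ?_⟩
      · intro f hf
        rcases List.mem_cons.mp hf with h | h
        · rw [h]; exact hT
        · exact hw f h
      · rw [List.prod_cons, Module.End.mul_apply]
    | zero => simp
    | add x y _ _ hx hy => simpa [map_add] using add_mem hx hy
    | smul a x _ hx => simpa [map_smul] using Submodule.smul_mem W a hx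
  have hBW : ∀ x ∈ W, B x ∈ W := hstep B (Or.inl rfl)
  have hCW : ∀ x ∈ W, C x ∈ W := hstep C (Or.inr rfl)
  -- the correction term vanishes at k = 1
  have hcorr : ∀ i, 1 ≤ i → i < l → e (i - 1, 1, 1 - (lam (i - 1) - lam i)) = 0 := by
    intro i h1 h2
    apply hzero
    rw [validIdx_def]
    rcases Nat.lt_or_ge i 2 with h | h
    · -- i = 1, first coordinate is 0
      intro hv
      omega
    · -- i ≥ 2, third coordinate is 0
      have hst : lam (i - 1 + 1) < lam (i - 1) := hlam (i - 1) (by omega) (by omega)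
      have hi1 : i - 1 + 1 = i := by omega
      rw [hi1] at hst
      intro hv
      omega
  -- value of C on the top row
  have hCtop : ∀ i k, ValidIdx l lam r (i, r i, k) →
      C (e (i, r i, k)) = e (i + 1, 1, k) + e (i - 1, 1, k - (lam (i - 1) - lam i)) := by
    intro i k hv
    rw [hC _ _ _ hv, if_neg (lt_irrefl (r i))]
  -- build the row e (i, j, 1) by induction on i
  have iprop : ∀ i, 1 ≤ i → i ≤ l → ∀ j, 1 ≤ j → j ≤ r i → e (i, j, 1) ∈ W := by
    intro i
    induction i with
    | zero => omega
    | succ i IH =>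
      intro h1 h2
      -- first, e (i+1, 1, 1) ∈ W
      have base : e (i + 1, 1, 1) ∈ W := by
        rcases Nat.eq_zero_or_pos i with hi0 | hi0
        · rw [hi0]; exact hmem0
        · have hvr : ValidIdx l lam r (i, r i, 1) := by
            rw [validIdx_def]
            exact ⟨hi0, by omega, hrpos i hi0 (by omega), le_refl _, le_refl _,
              hlampos i hi0 (by omega)⟩
          have hrow : e (i, r i, 1) ∈ W := IH hi0 (by omega) (r i) (hrpos i hi0 (by omega)) (le_refl _)
          have hCval := hCtop i 1 hvr
          have hc0 : e (i - 1, 1, 1 - (lam (i - 1) - lam i)) = 0 := hcorr i hi0 (by omega)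
          rw [hc0, add_zero] at hCval
          rw [← hCval]
          exact hCW _ hrow
      -- now propagate in j
      intro j
      induction j with
      | zero => omega
      | succ j IHj =>
        intro _ hj2
        rcases Nat.eq_zero_or_pos j with hj0 | hj0
        · rw [hj0]; exact base
        · have hvj : ValidIdx l lam r (i + 1, j, 1) := by
            rw [validIdx_def]
            exact ⟨by omega, h2, hj0, by omega, le_refl _, hlampos (i + 1) (by omega) h2⟩
          have hmemj : e (i + 1, j, 1) ∈ W := IHj hj0 (by omega)
          have hCval := hC (i + 1) j 1 hvj
          rw [if_pos (by omega : j < r (i + 1))] at hCval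
          rw [← hCval]
          exact hCW _ hmemj
  -- propagate in k with B
  have key : ∀ p, ValidIdx l lam r p → e p ∈ W := by
    rintro ⟨i, j, k⟩ hv
    rw [validIdx_def] at hv
    obtain ⟨h1, h2, h3, h4, h5, h6⟩ := hv
    clear hbasis
    induction k with
    | zero => omega
    | succ k IHk =>
      rcases Nat.eq_zero_or_pos k with hk0 | hk0
      · rw [hk0]
        exact iprop i h1 h2 j h3 h4
      · have hvk : ValidIdx l lam r (i, j, k) := by
          rw [validIdx_def]
          exact ⟨h1, h2, h3, h4, hk0, by omega⟩
        have hmemk : e (i, j, k) ∈ W := IHk hk0 (by omega)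
        rw [← hB i j k hvk]
        exact hBW _ hmemk
  -- conclude
  rw [eq_top_iff, ← hspan, Submodule.span_le]
  rintro x ⟨p, rfl⟩
  by_cases h : ValidIdx l lam r p
  · exact key p h
  · rw [hzero p h]; exact zero_mem _
end

section
/- Let R be a commutative unital subalgebra of M_n(F). If there exists a vector v ∈ F^n cyclic for R (i.e. Rv = F^n) and a vector w ∈ F^n cyclic for the transposed algebra Rᵀ = {Mᵀ : M ∈ R}, then R is a Gorenstein ring. -/
open Matrix

set_option maxHeartbeats 4000000
set_option synthInstance.maxHeartbeats 400000

/-- Proposition: a commutative unital subalgebra `R` of `M_n(F)` whose action on `F^n`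
is cyclic and cocyclic (both `R` and `Rᵀ` have a cyclic vector) is Gorenstein,
i.e. `R` is an injective module over itself. -/
theorem gorenstein_of_cyclic_cocyclic {F : Type*} [Field F] {n : ℕ} (hn : 0 < n)
    (R : Subalgebra F (Matrix (Fin n) (Fin n) F))
    (hcomm : ∀ x ∈ R, ∀ y ∈ R, x * y = y * x)
    (v w : Fin n → F)
    (hv : ∀ u : Fin n → F, ∃ M ∈ R, M *ᵥ v = u)
    (hw : ∀ u : Fin n → F, ∃ M ∈ R, Mᵀ *ᵥ w = u) :
    Module.Injective R R := by
  classical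
  -- the Frobenius functional
  set φ : R →ₗ[F] F :=
    { toFun := fun a => w ⬝ᵥ (a.1 *ᵥ v)
      map_add' := by intro a b; simp [add_mulVec, dotProduct_add]
      map_smul' := by intro c a; simp [smul_mulVec, dotProduct_smul] } with hφ
  have φ_apply : ∀ a : R, φ a = w ⬝ᵥ (a.1 *ᵥ v) := fun a => rfl
  -- a matrix in R killing v is zero
  have keyA : ∀ a : Matrix (Fin n) (Fin n) F, a ∈ R → a *ᵥ v = 0 → a = 0 := by
    intro a ha h0
    have hall : ∀ u : Fin n → F, a *ᵥ u = 0 := by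
      intro u
      obtain ⟨M, hM, hMv⟩ := hv u
      calc a *ᵥ u = a *ᵥ (M *ᵥ v) := by rw [hMv]
        _ = (a * M) *ᵥ v := mulVec_mulVec v a M
        _ = (M * a) *ᵥ v := by rw [hcomm a ha M hM]
        _ = M *ᵥ (a *ᵥ v) := (mulVec_mulVec v M a).symm
        _ = 0 := by rw [h0, mulVec_zero]
    ext i j
    have := congrFun (hall (Pi.single j 1)) i
    simpa [mulVec_single] using this
  -- nondegeneracy
  have keyB : ∀ a : R, (∀ c : R, φ (c * a) = 0) → a = 0 := by
    intro a h
    have hv0 : a.1 *ᵥ v = 0 := by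
      funext i
      obtain ⟨M, hM, hMw⟩ := hw (Pi.single i 1)
      have h0 := h ⟨M, hM⟩
      rw [φ_apply] at h0
      have : w ⬝ᵥ ((M * a.1) *ᵥ v) = Pi.single i 1 ⬝ᵥ (a.1 *ᵥ v) := by
        rw [← hMw, mulVec_transpose, ← dotProduct_mulVec, mulVec_mulVec]
      rw [MulMemClass.coe_mul] at h0
      rw [this] at h0
      simpa [single_dotProduct] using h0
    exact Subtype.ext (keyA a.1 a.2 hv0)
  -- the bilinear map and its associated linear map to the dual
  set B : R →ₗ[F] Module.Dual F R :=
    LinearMap.mk₂ F (fun a b => φ (a * b))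
      (fun a a' b => by show φ ((a + a') * b) = φ (a * b) + φ (a' * b); rw [add_mul, map_add])
      (fun c a b => by show φ ((c • a) * b) = c • φ (a * b); rw [smul_mul_assoc]; exact φ.map_smul c (a * b))
      (fun a b b' => by show φ (a * (b + b')) = φ (a * b) + φ (a * b'); rw [mul_add, map_add])
      (fun c a b => by show φ (a * (c • b)) = c • φ (a * b); rw [mul_smul_comm]; exact φ.map_smul c (a * b)) with hB
  have B_apply : ∀ a b : R, B a b = φ (a * b) := fun a b => rfl
  have mulcomm : ∀ a b : R, a * b = b * a := by
    intro a b; exact Subtype.ext (hcomm a.1 a.2 b.1 b.2)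
  have Binj : Function.Injective B := by
    rw [← LinearMap.ker_eq_bot, Submodule.eq_bot_iff]
    intro a ha
    rw [LinearMap.mem_ker] at ha
    refine keyB a fun c => ?_
    rw [mulcomm c a, ← B_apply, ha]; rfl
  have Bsurj : Function.Surjective B :=
    (LinearMap.injective_iff_surjective_of_finrank_eq_finrank
      (Subspace.dual_finrank_eq (K := F) (V := R)).symm).mp Binj
  -- Baer's criterion
  refine Module.Baer.injective ?_
  intro I f
  -- extend the functional x ↦ φ (f x) from I to all of R
  obtain ⟨L, hL⟩ := LinearMap.exists_extend (p := Submodule.restrictScalars F I)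
    (φ.comp (f.restrictScalars F))
  obtain ⟨r, hr⟩ := Bsurj L
  have hr' : ∀ y : R, L y = φ (r * y) := by
    intro y; rw [← hr]; exact B_apply r y
  refine ⟨LinearMap.toSpanSingleton R R r, fun x hx => ?_⟩
  have hLval : ∀ y : R, ∀ hy : y ∈ I, L y = φ (f ⟨y, hy⟩) := by
    intro y hy
    exact LinearMap.congr_fun hL ⟨y, hy⟩
  have : f ⟨x, hx⟩ - x • r = 0 := by
    refine keyB _ fun c => ?_
    have h1 : c * f ⟨x, hx⟩ = f ⟨c * x, I.mul_mem_left c hx⟩ := by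
      have e1 : c * f ⟨x, hx⟩ = c • f ⟨x, hx⟩ := rfl
      have e2 : c • (⟨x, hx⟩ : I) = ⟨c * x, I.mul_mem_left c hx⟩ := rfl
      rw [e1, ← f.map_smul c ⟨x, hx⟩, e2]
    have h2 : φ (f ⟨c * x, I.mul_mem_left c hx⟩) = φ (c * (x * r)) := by
      rw [← hLval (c * x) (I.mul_mem_left c hx), hr' (c * x), mulcomm r (c * x), mul_assoc]
    rw [mul_sub, φ.map_sub, h1, smul_eq_mul, ← mul_assoc, mul_assoc c x r, h2, sub_self]
  have hfx : f ⟨x, hx⟩ = x • r := by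
    have := sub_eq_zero.mp this
    exact this
  rw [LinearMap.toSpanSingleton_apply, hfx]
end

section
/- Let R be a commutative unital subalgebra of M_n(F) such that both R and the transposed algebra Rᵀ have cyclic vectors on F^n. Then F^n is isomorphic as an R-module both to R and to the F-linear dual module Hom_F(R, F); hence R is self-dual as an R-module. -/
set_option synthInstance.maxHeartbeats 1000000
set_option maxHeartbeats 1000000

open Matrix

/-- If both a commutative unital subalgebra `R ⊆ M_n(F)` and its transpose `Rᵀ` have
cyclic vectors on `F^n`, then `F^n` is isomorphic as an `R`-module both to `R` and to
the `F`-linear dual `Hom_F(R, F)` (with action `(r·φ)(s) = φ(rs)`); hence `R` is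
self-dual as an `R`-module. -/
theorem selfdual_of_cyclic_cocyclic {F : Type*} [Field F] {n : ℕ} (hn : 0 < n)
    (R : Subalgebra F (Matrix (Fin n) (Fin n) F))
    (hcomm : ∀ x ∈ R, ∀ y ∈ R, x * y = y * x)
    (v w : Fin n → F)
    (hv : ∀ u : Fin n → F, ∃ M ∈ R, M *ᵥ v = u)
    (hw : ∀ u : Fin n → F, ∃ M ∈ R, Mᵀ *ᵥ w = u) :
    (∃ f : R ≃ₗ[F] (Fin n → F), ∀ (r x : R),
      f (r * x) = (r : Matrix (Fin n) (Fin n) F) *ᵥ f x) ∧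
    (∃ g : (Fin n → F) ≃ₗ[F] (R →ₗ[F] F), ∀ (r : R) (x : Fin n → F) (s : R),
      g ((r : Matrix (Fin n) (Fin n) F) *ᵥ x) s = g x (r * s)) ∧
    (∃ h : R ≃ₗ[F] (R →ₗ[F] F), ∀ (r m s : R), h (r * m) s = h m (r * s)) := by
  classical
  -- The linear map `M ↦ M v`.
  let fl : R →ₗ[F] (Fin n → F) :=
    { toFun := fun M => (M : Matrix (Fin n) (Fin n) F) *ᵥ v
      map_add' := fun a b => by simp [add_mulVec]
      map_smul' := fun c a => by simp [smul_mulVec] }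
  have fl_inj : Function.Injective fl := by
    rw [← LinearMap.ker_eq_bot, LinearMap.ker_eq_bot']
    intro M hM
    have hMv : (M : Matrix (Fin n) (Fin n) F) *ᵥ v = 0 := hM
    have hall : ∀ u, (M : Matrix (Fin n) (Fin n) F) *ᵥ u = 0 := by
      intro u
      obtain ⟨N, hN, hNu⟩ := hv u
      rw [← hNu, mulVec_mulVec, hcomm _ M.2 _ hN, ← mulVec_mulVec, hMv, mulVec_zero]
    have : (M : Matrix (Fin n) (Fin n) F) = 0 := by
      ext i j
      have := congrFun (hall (Pi.single j 1)) i
      simpa [mulVec_single] using this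
    exact Subtype.ext this
  have fl_surj : Function.Surjective fl := by
    intro u
    obtain ⟨M, hM, hMu⟩ := hv u
    exact ⟨⟨M, hM⟩, hMu⟩
  let f : R ≃ₗ[F] (Fin n → F) := LinearEquiv.ofBijective fl ⟨fl_inj, fl_surj⟩
  have hf : ∀ (r x : R), f (r * x) = (r : Matrix (Fin n) (Fin n) F) *ᵥ f x := by
    intro r x
    show ((r * x : R) : Matrix (Fin n) (Fin n) F) *ᵥ v
      = (r : Matrix (Fin n) (Fin n) F) *ᵥ ((x : Matrix (Fin n) (Fin n) F) *ᵥ v)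
    rw [mulVec_mulVec]; rfl
  -- The linear map `x ↦ (s ↦ ⟨w, s x⟩)`.
  let G : (Fin n → F) →ₗ[F] (R →ₗ[F] F) :=
    { toFun := fun x =>
        { toFun := fun s => w ⬝ᵥ ((s : Matrix (Fin n) (Fin n) F) *ᵥ x)
          map_add' := fun a b => by simp [add_mulVec, dotProduct_add]
          map_smul' := fun c a => by simp [smul_mulVec, dotProduct_smul] }
      map_add' := fun a b => by
        ext s; simp [mulVec_add, dotProduct_add]
      map_smul' := fun c a => by
        ext s; simp [mulVec_smul, dotProduct_smul] }
  have G_inj : Function.Injective G := by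
    rw [← LinearMap.ker_eq_bot, LinearMap.ker_eq_bot']
    intro x hx
    have hall : ∀ u : Fin n → F, u ⬝ᵥ x = 0 := by
      intro u
      obtain ⟨M, hM, hMu⟩ := hw u
      have := congrFun (congrArg (fun φ : R →ₗ[F] F => φ.toFun) hx) ⟨M, hM⟩
      rw [← hMu, mulVec_transpose, ← dotProduct_mulVec]
      exact this
    funext i
    simpa [single_dotProduct] using hall (Pi.single i 1)
  haveI : FiniteDimensional F R := inferInstance
  have hrank : Module.finrank F (Fin n → F) = Module.finrank F (R →ₗ[F] F) := by
    have h1 : Module.finrank F R = Module.finrank F (Fin n → F) :=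
      LinearEquiv.finrank_eq f
    have h2 : Module.finrank F (Module.Dual F R) = Module.finrank F R :=
      Subspace.dual_finrank_eq
    have h3 : Module.finrank F (R →ₗ[F] F) = Module.finrank F (Module.Dual F R) := rfl
    omega
  have G_surj : Function.Surjective G :=
    (LinearMap.injective_iff_surjective_of_finrank_eq_finrank hrank).mp G_inj
  let g : (Fin n → F) ≃ₗ[F] (R →ₗ[F] F) := LinearEquiv.ofBijective G ⟨G_inj, G_surj⟩
  have hg : ∀ (r : R) (x : Fin n → F) (s : R),
      g ((r : Matrix (Fin n) (Fin n) F) *ᵥ x) s = g x (r * s) := by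
    intro r x s
    show w ⬝ᵥ ((s : Matrix (Fin n) (Fin n) F) *ᵥ ((r : Matrix (Fin n) (Fin n) F) *ᵥ x))
      = w ⬝ᵥ (((r * s : R) : Matrix (Fin n) (Fin n) F) *ᵥ x)
    rw [mulVec_mulVec, hcomm _ s.2 _ r.2]; rfl
  refine ⟨⟨f, hf⟩, ⟨g, hg⟩, ⟨f.trans g, ?_⟩⟩
  intro r m s
  show g (f (r * m)) s = g (f m) (r * s)
  rw [hf, hg]
end

section
/- Let H = (h₀, h₁, ..., h_k) be a finite sequence of positive integers satisfying: h_i = i+1 for i < d, h_{d-1} = d ≥ h_d ≥ ... ≥ h_k = 1, and h_{i-1} − h_i ≤ 1 for i ≥ d (the Hilbert function of a complete intersection of embedding dimension ≤ 2). Define the partition λ(H) whose i-th part equals #{j : h_j ≥ i}. Then consecutive parts of λ(H) differ by at least 2: λ(H)_i − λ(H)_{i+1} ≥ 2 whenever λ(H)_{i+1} > 0. -/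
/-- The partition associated to a finite sequence `H = (h_0, …, h_k)`:
its `i`-th part is `#{j ∈ {0,…,k} : h_j ≥ i}`. -/
def lamOf (h : ℕ → ℕ) (k : ℕ) (i : ℕ) : ℕ :=
  ((Finset.range (k + 1)).filter (fun j => i ≤ h j)).card

/-- If `(h_0, …, h_k)` is the Hilbert function of a complete intersection of embedding
dimension at most 2 — i.e. `h_i = i + 1` for `i < d`, then `d = h_{d-1} ≥ h_d ≥ ⋯ ≥
h_k = 1` with successive drops at most 1 — then consecutive parts of the associated
partition `λ(H)` differ by at least 2: `λ(H)_{i+1} + 2 ≤ λ(H)_i` whenever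
`λ(H)_{i+1} > 0`. -/
theorem parts_differ_by_two (h : ℕ → ℕ) (k d : ℕ)
    (hd : 1 ≤ d) (hdk : d - 1 ≤ k)
    (hinit : ∀ i, i < d → h i = i + 1)
    (hdec : ∀ i, d ≤ i → i ≤ k → h i ≤ h (i - 1) ∧ h (i - 1) ≤ h i + 1)
    (hlast : h k = 1)
    (hpos : ∀ i, i ≤ k → 1 ≤ h i) :
    ∀ i : ℕ, 1 ≤ i → 0 < lamOf h k (i + 1) → lamOf h k (i + 1) + 2 ≤ lamOf h k i := by
  -- h is weakly decreasing on [d-1, k]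
  have anti : ∀ a, d - 1 ≤ a → ∀ b, a ≤ b → b ≤ k → h b ≤ h a := by
    intro a ha b hab
    induction b, hab using Nat.le_induction with
    | base => intro _; exact le_refl _
    | succ b hb ih =>
      intro hbk
      have h1 := hdec (b + 1) (by omega) hbk
      simp only [Nat.add_sub_cancel] at h1
      exact le_trans h1.1 (ih (by omega))
  intro i hi hpos'
  unfold lamOf at *
  set T := (Finset.range (k + 1)).filter (fun j => i + 1 ≤ h j) with hT
  have hne : T.Nonempty := Finset.card_pos.mp hpos'
  set m := T.max' hne with hmdef
  have hmem : m ∈ T := T.max'_mem hne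
  have hmk : m ≤ k := by
    have := (Finset.mem_filter.mp hmem).1
    simp only [Finset.mem_range] at this; omega
  have hmh : i + 1 ≤ h m := (Finset.mem_filter.mp hmem).2
  have hmax : ∀ x ∈ T, x ≤ m := fun x hx => T.le_max' x hx
  -- m ≥ i
  have hmi : i ≤ m := by
    by_cases hmd : m < d
    · have := hinit m hmd; omega
    · have := anti (d - 1) (le_refl _) m (by omega) hmk
      rw [hinit (d - 1) (by omega)] at this; omega
  -- m < k
  have hmk' : m < k := by
    rcases lt_or_eq_of_le hmk with h' | h'
    · exact h'
    · rw [h', hlast] at hmh; omega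
  -- h (m+1) ≥ i
  have hm1 : i ≤ h (m + 1) := by
    by_cases hmd : m + 1 < d
    · rw [hinit (m + 1) hmd]; omega
    · have h1 := hdec (m + 1) (by omega) (by omega)
      simp only [Nat.add_sub_cancel] at h1; omega
  -- h (m+1) ≤ i
  have hm2 : h (m + 1) ≤ i := by
    by_contra hc
    have : m + 1 ∈ T := by
      rw [hT]; simp only [Finset.mem_filter, Finset.mem_range]; omega
    have := hmax _ this; omega
  -- h (i-1) ≥ i
  have hi1 : i ≤ h (i - 1) := by
    by_cases hid : i - 1 < d
    · rw [hinit (i - 1) hid]; omega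
    · have := anti (i - 1) (by omega) m (by omega) hmk; omega
  -- h (i-1) ≤ i
  have hi2 : h (i - 1) ≤ i := by
    by_cases hid : i - 1 < d
    · rw [hinit (i - 1) hid]; omega
    · have := anti (d - 1) (le_refl _) (i - 1) (by omega) (by omega)
      rw [hinit (d - 1) (by omega)] at this; omega
  -- the big set contains insert (i-1) (insert (m+1) T)
  have hsub : insert (i - 1) (insert (m + 1) T) ⊆
      (Finset.range (k + 1)).filter (fun j => i ≤ h j) := by
    intro x hx
    simp only [Finset.mem_insert, hT, Finset.mem_filter, Finset.mem_range] at hx ⊢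
    rcases hx with rfl | rfl | ⟨hx1, hx2⟩
    · omega
    · omega
    · omega
  have hnm1 : m + 1 ∉ T := by
    rw [hT]; simp only [Finset.mem_filter, Finset.mem_range]; omega
  have hni : i - 1 ∉ insert (m + 1) T := by
    simp only [Finset.mem_insert, hT, Finset.mem_filter, Finset.mem_range]
    push_neg
    exact ⟨by omega, fun _ => by omega⟩
  calc T.card + 2 = (insert (i - 1) (insert (m + 1) T)).card := by
        rw [Finset.card_insert_of_notMem hni, Finset.card_insert_of_notMem hnm1]
    _ ≤ _ := Finset.card_le_card hsub
end
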